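/- Let 𝔊₉ be the 7-dimensional real Lie algebra with basis (X₁,X₂,X₃,X₄,X₅,X,Y) and nonzero brackets [X₁,X₂]=X₄, [X₁,X₃]=X₅, [X,X₃]=X₃, [X,X₅]=X₅, [Y,X₂]=X₂, [Y,X₄]=X₄, [Y,X₃]=X₅. Let F ∈ 𝔊₉* have coordinates (α₁,α₂,α₃,α₄,α₅,α,β) with α₄α₅ ≠ 0. Then Ω_F(𝔊₉) = { (x₁*,x₂*,x₃*,x₄*,x₅*,x*,y*) ∈ 𝔊₉* : x₂*/x₄* − x₃*/x₅* + ln|x₄*| = α₂/α₄ − α₃/α₅ + ln|α₄|, α₄x₄* > 0, α₅x₅* > 0 } (here x₁*, x*, y* range over all of ℝ). -/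

import Mathlib

noncomputable section

/-- Half of the structure constants of the Lie algebra 𝔊₉ (indices `0,…,4` are
`X₁,…,X₅`, index `5` is `X`, index `6` is `Y`). -/
def g9half (i j : Fin 7) : Fin 7 → ℝ :=
  if i = 0 ∧ j = 1 then Pi.single 3 1      -- [X₁,X₂] = X₄
  else if i = 0 ∧ j = 2 then Pi.single 4 1 -- [X₁,X₃] = X₅
  else if i = 5 ∧ j = 2 then Pi.single 2 1 -- [X,X₃] = X₃
  else if i = 5 ∧ j = 4 then Pi.single 4 1 -- [X,X₅] = X₅
  else if i = 6 ∧ j = 1 then Pi.single 1 1 -- [Y,X₂] = X₂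
  else if i = 6 ∧ j = 3 then Pi.single 3 1 -- [Y,X₄] = X₄
  else if i = 6 ∧ j = 2 then Pi.single 4 1 -- [Y,X₃] = X₅
  else 0

/-- The bracket `[Xᵢ, Xⱼ]` (in coordinates) of basis vectors of 𝔊₉. -/
def g9br (i j : Fin 7) : Fin 7 → ℝ := g9half i j - g9half j i

/-- The matrix (in the given basis) of the adjoint endomorphism `ad_U : T ↦ [U,T]`
of 𝔊₉, where `u` is the coordinate vector of `U`. -/
def adG9 (u : Fin 7 → ℝ) : Matrix (Fin 7) (Fin 7) ℝ :=
  Matrix.of fun k j => ∑ i, u i * g9br i j k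

/-- `Ω_F(𝔊₉) = {F_U : U ∈ 𝔊₉}` where `⟨F_U,T⟩ = ⟨F, exp(ad_U)(T)⟩`; in coordinates
(dual basis), `F_U = α ᵥ* exp(ad_U)` where `α` is the coordinate vector of `F`. -/
def OmegaG9 (α : Fin 7 → ℝ) : Set (Fin 7 → ℝ) :=
  {g | ∃ u : Fin 7 → ℝ, g = Matrix.vecMul α (NormedSpace.exp (adG9 u))}

/-!
Write `U = u₁X₁ + ⋯ + u₅X₅ + aX + bY`. In the dual basis `F ↦ F ∘ ad_U` is triangular: `x₄*`, `x₅*`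
are eigencoordinates with eigenvalues `b`, `a`, and `x₂*`, `x₃*` sit in Jordan blocks above them, so
`α ᵥ* ad_U ^ (n + 1)` has a closed form and the exponential series sums to
`x₄* = α₄eᵇ`, `x₅* = α₅eᵃ`, `x₂* = (α₂ + u₁α₄)eᵇ`, `x₃* = (α₃ + (u₁ + b)α₅)eᵃ`,
with `x₁*, x*, y*` involving `φ(x) = (eˣ - 1)/x` and `φ'`. These four formulas give the invariant
and the sign conditions. Conversely they determine `a`, `b`, `u₁` from a point of the level set, and
with `u₃ = 0` the coordinates `x₁*, x*, y*` are affine in `u₂, u₅, u₄` with slopes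
`-α₄φ(b), -α₅φ(a), -α₄φ(b)`, nonzero because `φ > 0`.
-/

open NormedSpace Nat Matrix

theorem hasSum_vecMul_exp {ι : Type*} [Fintype ι] [DecidableEq ι] (v : ι → ℝ)
    (M : Matrix ι ι ℝ) : HasSum (fun n => (n !⁻¹ : ℝ) • v ᵥ* M ^ n) (v ᵥ* exp M) := by
  let : NormedRing (Matrix ι ι ℝ) := Matrix.linftyOpNormedRing
  let : NormedAlgebra ℝ (Matrix ι ι ℝ) := Matrix.linftyOpNormedAlgebra
  convert (exp_series_hasSum_exp' (𝕂 := ℝ) M).map (Matrix.vecMulBilin ℝ ℝ v)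
    (continuous_const.matrix_vecMul continuous_id) using 1
  · funext n
    simp
  · rfl

theorem hasSum_pow_div_factorial (x : ℝ) : HasSum (fun n => x ^ n / n !) (Real.exp x) :=
  Real.exp_eq_exp_ℝ ▸ expSeries_div_hasSum_exp x

theorem hasSum_pow_succ_div_factorial_succ (x : ℝ) :
    HasSum (fun n : ℕ => ((n + 1)! : ℝ)⁻¹ * x ^ (n + 1)) (Real.exp x - 1) := by
  have := (hasSum_nat_add_iff' 1).mpr (hasSum_pow_div_factorial x)
  simp only [Finset.range_one, Finset.sum_singleton, pow_zero, factorial_zero, cast_one, div_one] at this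
  simpa only [div_eq_inv_mul] using this

theorem hasSum_succ_mul_pow_div_factorial_succ (x : ℝ) :
    HasSum (fun n : ℕ => ((n + 1)! : ℝ)⁻¹ * ((n + 1) * x ^ n)) (Real.exp x) := by
  convert hasSum_pow_div_factorial x using 2 with n
  rw [factorial_succ]
  push_cast
  field_simp

theorem summable_pow_div_factorial_succ (x : ℝ) :
    Summable (fun n : ℕ => ((n + 1)! : ℝ)⁻¹ * x ^ n) := by
  refine .of_norm_bounded (Real.summable_pow_div_factorial |x|) fun n => ?_
  rw [norm_mul, norm_inv, norm_pow, Real.norm_natCast, Real.norm_eq_abs, inv_mul_eq_div]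
  gcongr
  exact le_succ n

theorem summable_mul_pow_pred_div_factorial_succ (x : ℝ) :
    Summable (fun n : ℕ => ((n + 1)! : ℝ)⁻¹ * (n * x ^ (n - 1))) := by
  refine (summable_nat_add_iff 1).mp (.of_norm_bounded (Real.summable_pow_div_factorial |x|) fun n => ?_)
  rw [norm_mul, norm_mul, norm_inv, norm_pow, Real.norm_natCast, Real.norm_natCast, Real.norm_eq_abs,
    add_tsub_cancel_right, inv_mul_eq_div, div_le_div_iff₀ (by positivity) (by positivity)]
  have : ((n + 1 : ℕ) : ℝ) * n ! ≤ (n + 1 + 1)! := by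
    exact_mod_cast factorial_succ n ▸ factorial_le (le_succ _)
  nlinarith [pow_nonneg (abs_nonneg x) n]

/-- `(exp x - 1) / x`, extended continuously by `1` at `0`. -/
def expSubOneDiv (x : ℝ) : ℝ := ∑' n : ℕ, ((n + 1)! : ℝ)⁻¹ * x ^ n

def derivExpSubOneDiv (x : ℝ) : ℝ := ∑' n : ℕ, ((n + 1)! : ℝ)⁻¹ * (n * x ^ (n - 1))

theorem hasSum_expSubOneDiv (x : ℝ) :
    HasSum (fun n : ℕ => ((n + 1)! : ℝ)⁻¹ * x ^ n) (expSubOneDiv x) :=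
  (summable_pow_div_factorial_succ x).hasSum

theorem hasSum_derivExpSubOneDiv (x : ℝ) :
    HasSum (fun n : ℕ => ((n + 1)! : ℝ)⁻¹ * (n * x ^ (n - 1))) (derivExpSubOneDiv x) :=
  (summable_mul_pow_pred_div_factorial_succ x).hasSum

theorem mul_expSubOneDiv (x : ℝ) : x * expSubOneDiv x = Real.exp x - 1 := by
  refine ((hasSum_expSubOneDiv x).mul_left x).unique ?_
  convert hasSum_pow_succ_div_factorial_succ x using 2 with n
  · rfl
  · ring

theorem expSubOneDiv_pos (x : ℝ) : 0 < expSubOneDiv x := by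
  rcases lt_trichotomy x 0 with hx | rfl | hx
  · have : Real.exp x < 1 := Real.exp_lt_one_iff.mpr hx
    nlinarith [mul_expSubOneDiv x]
  · rw [expSubOneDiv, tsum_eq_single 0 fun n hn => by simp [hn]]
    simp
  · have : 1 < Real.exp x := Real.one_lt_exp_iff.mpr hx
    nlinarith [mul_expSubOneDiv x]

theorem vecMul_adG9 (u v : Fin 7 → ℝ) :
    v ᵥ* adG9 u = ![-(u 1 * v 3) - u 2 * v 4, u 6 * v 1 + u 0 * v 3,
      u 5 * v 2 + (u 0 + u 6) * v 4, u 6 * v 3, u 5 * v 4, -(u 2 * v 2) - u 4 * v 4,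
      -(u 1 * v 1) - u 3 * v 3 - u 2 * v 4] := by
  ext j
  fin_cases j <;>
    simp [adG9, g9br, g9half, vecMul, dotProduct, Fin.sum_univ_seven, Pi.single_apply] <;> ring

theorem vecMul_adG9_pow_succ (α u : Fin 7 → ℝ) (n : ℕ) :
    α ᵥ* adG9 u ^ (n + 1) =
      ![-(u 1 * α 3) * u 6 ^ n - u 2 * α 4 * u 5 ^ n,
        α 1 * u 6 ^ (n + 1) + (n + 1) * (u 0 * α 3) * u 6 ^ n,
        α 2 * u 5 ^ (n + 1) + (n + 1) * ((u 0 + u 6) * α 4) * u 5 ^ n,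
        α 3 * u 6 ^ (n + 1),
        α 4 * u 5 ^ (n + 1),
        -(u 2 * α 2 + u 4 * α 4) * u 5 ^ n - n * (u 2 * (u 0 + u 6) * α 4) * u 5 ^ (n - 1),
        -(u 1 * α 1 + u 3 * α 3) * u 6 ^ n - n * (u 1 * u 0 * α 3) * u 6 ^ (n - 1)
          - u 2 * α 4 * u 5 ^ n] := by
  induction n with
  | zero => rw [zero_add, pow_one, vecMul_adG9]; ext j; fin_cases j <;> simp <;> ring
  | succ n ih =>
    rw [pow_succ, ← vecMul_vecMul, ih, vecMul_adG9]
    ext j; fin_cases j <;> simp <;> ring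

theorem vecMul_exp_adG9 (α u : Fin 7 → ℝ) :
    α ᵥ* exp (adG9 u) =
      ![α 0 - u 1 * α 3 * expSubOneDiv (u 6) - u 2 * α 4 * expSubOneDiv (u 5),
        (α 1 + u 0 * α 3) * Real.exp (u 6),
        (α 2 + (u 0 + u 6) * α 4) * Real.exp (u 5),
        α 3 * Real.exp (u 6),
        α 4 * Real.exp (u 5),
        α 5 - (u 2 * α 2 + u 4 * α 4) * expSubOneDiv (u 5)
          - u 2 * (u 0 + u 6) * α 4 * derivExpSubOneDiv (u 5),
        α 6 - (u 1 * α 1 + u 3 * α 3) * expSubOneDiv (u 6)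
          - u 1 * u 0 * α 3 * derivExpSubOneDiv (u 6) - u 2 * α 4 * expSubOneDiv (u 5)] := by
  refine (hasSum_vecMul_exp α (adG9 u)).unique ((hasSum_nat_add_iff' 1).mp ?_)
  simp only [vecMul_adG9_pow_succ, Finset.range_one, Finset.sum_singleton, pow_zero, vecMul_one,
    factorial_zero, cast_one, inv_one, one_smul]
  rw [Pi.hasSum]
  intro j
  fin_cases j <;> [
    convert ((hasSum_expSubOneDiv (u 6)).mul_left (-(u 1 * α 3))).add
      ((hasSum_expSubOneDiv (u 5)).mul_left (-(u 2 * α 4))) using 1;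
    convert ((hasSum_pow_succ_div_factorial_succ (u 6)).mul_left (α 1)).add
      ((hasSum_succ_mul_pow_div_factorial_succ (u 6)).mul_left (u 0 * α 3)) using 1;
    convert ((hasSum_pow_succ_div_factorial_succ (u 5)).mul_left (α 2)).add
      ((hasSum_succ_mul_pow_div_factorial_succ (u 5)).mul_left ((u 0 + u 6) * α 4)) using 1;
    convert (hasSum_pow_succ_div_factorial_succ (u 6)).mul_left (α 3) using 1;
    convert (hasSum_pow_succ_div_factorial_succ (u 5)).mul_left (α 4) using 1;
    convert ((hasSum_expSubOneDiv (u 5)).mul_left (-(u 2 * α 2 + u 4 * α 4))).add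
      ((hasSum_derivExpSubOneDiv (u 5)).mul_left (-(u 2 * (u 0 + u 6) * α 4))) using 1;
    convert (((hasSum_expSubOneDiv (u 6)).mul_left (-(u 1 * α 1 + u 3 * α 3))).add
      ((hasSum_derivExpSubOneDiv (u 6)).mul_left (-(u 1 * u 0 * α 3)))).add
      ((hasSum_expSubOneDiv (u 5)).mul_left (-(u 2 * α 4))) using 1]
  all_goals first | rfl | (funext n; simp; ring) | (simp; ring)

def g9Invariant (g : Fin 7 → ℝ) : ℝ := g 1 / g 3 - g 2 / g 4 + Real.log |g 3|

theorem g9Invariant_vecMul_exp_adG9 {α : Fin 7 → ℝ} (h3 : α 3 ≠ 0) (h4 : α 4 ≠ 0)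
    (u : Fin 7 → ℝ) : g9Invariant (α ᵥ* exp (adG9 u)) = g9Invariant α := by
  simp only [g9Invariant, vecMul_exp_adG9, cons_val]
  rw [abs_mul, Real.abs_exp, Real.log_mul (abs_ne_zero.2 h3) (Real.exp_pos _).ne', Real.log_exp]
  field_simp
  ring

theorem exists_vecMul_exp_adG9_eq {α g : Fin 7 → ℝ} (hinv : g9Invariant g = g9Invariant α)
    (h3 : 0 < α 3 * g 3) (h4 : 0 < α 4 * g 4) : ∃ u, α ᵥ* exp (adG9 u) = g := by
  have hα3 : α 3 ≠ 0 := left_ne_zero_of_mul h3.ne'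
  have hα4 : α 4 ≠ 0 := left_ne_zero_of_mul h4.ne'
  have hg3 : g 3 ≠ 0 := right_ne_zero_of_mul h3.ne'
  have hg4 : g 4 ≠ 0 := right_ne_zero_of_mul h4.ne'
  set b := Real.log (g 3 / α 3)
  set a := Real.log (g 4 / α 4)
  have hb : Real.exp b = g 3 / α 3 := Real.exp_log (div_pos_iff.2 (mul_pos_iff.1 (by rwa [mul_comm])))
  have ha : Real.exp a = g 4 / α 4 := Real.exp_log (div_pos_iff.2 (mul_pos_iff.1 (by rwa [mul_comm])))
  set t := g 1 / g 3 - α 1 / α 3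
  have htb : t + b = g 2 / g 4 - α 2 / α 4 := by
    have : b = Real.log |g 3| - Real.log |α 3| := by
      rw [← Real.log_div (abs_ne_zero.2 hg3) (abs_ne_zero.2 hα3), ← abs_div, Real.log_abs]
    simp only [g9Invariant] at hinv
    linarith
  have hφb := (expSubOneDiv_pos b).ne'
  have hφa := (expSubOneDiv_pos a).ne'
  set s := (α 0 - g 0) / (α 3 * expSubOneDiv b)
  set q := (α 5 - g 5) / (α 4 * expSubOneDiv a)
  set p := (α 6 - g 6 - s * α 1 * expSubOneDiv b - s * t * α 3 * derivExpSubOneDiv b) /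
    (α 3 * expSubOneDiv b)
  refine ⟨![t, s, 0, p, q, a, b], ?_⟩
  rw [vecMul_exp_adG9]
  ext j
  fin_cases j <;> simp only [Fin.zero_eta, Fin.mk_one, Fin.reduceFinMk, cons_val, hb, ha]
  · simp only [s]; field_simp; ring
  · simp only [t]; field_simp; ring
  · rw [htb]; field_simp; ring
  · field_simp
  · field_simp
  · simp only [q]; field_simp; ring
  · simp only [p]; field_simp; ring

theorem mul_self_mul_exp_pos {c : ℝ} (hc : c ≠ 0) (x : ℝ) : 0 < c * (c * Real.exp x) :=
  mul_assoc c c _ ▸ mul_pos (mul_self_pos.2 hc) (Real.exp_pos x)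

/-- If `F ∈ 𝔊₉*` has coordinates `(α₁,…,α₅,α,β)` with `α₄α₅ ≠ 0`, then
`Ω_F(𝔊₉) = {(x₁*,…,x₅*,x*,y*) : x₂*/x₄* − x₃*/x₅* + ln|x₄*| = α₂/α₄ − α₃/α₅ + ln|α₄|,
α₄x₄* > 0, α₅x₅* > 0}`. -/
theorem omega_G9_transcendental (α : Fin 7 → ℝ) (h45 : α 3 * α 4 ≠ 0) :
    OmegaG9 α = {g : Fin 7 → ℝ |
      g 1 / g 3 - g 2 / g 4 + Real.log |g 3| =
        α 1 / α 3 - α 2 / α 4 + Real.log |α 3| ∧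
      α 3 * g 3 > 0 ∧ α 4 * g 4 > 0} := by
  obtain ⟨h3, h4⟩ := mul_ne_zero_iff.mp h45
  ext g
  constructor
  · rintro ⟨u, rfl⟩
    refine ⟨g9Invariant_vecMul_exp_adG9 h3 h4 u, ?_, ?_⟩ <;> simp only [vecMul_exp_adG9, cons_val]
    exacts [mul_self_mul_exp_pos h3 _, mul_self_mul_exp_pos h4 _]
  · rintro ⟨hinv, hg3, hg4⟩
    obtain ⟨u, hu⟩ := exists_vecMul_exp_adG9_eq hinv hg3 hg4
    exact ⟨u, hu.symm⟩

end
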